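/- arXiv:2509.22432 — 5 statements merged into one kernel-verified Lean document; each statement's English description precedes it below -/
import Mathlib

section
/- Let σ = {v_0, …, v_k} ⊂ R^d be a k-simplex and m ∈ N, m ≥ 1. Let P_σ = { Σ_{i=0}^k λ_i v_i : Σ λ_i = 1, m·λ_i ∈ N for all i } be the grid of points with barycentric coordinates that are multiples of 1/m. Then every point q ∈ conv(σ) is within Euclidean distance (1/m)·sqrt(Σ_{i<j} ‖v_i − v_j‖²) of some point of P_σ, i.e., the directed Hausdorff distance from conv(σ) to P_σ is at most (1/m)·sqrt(Σ_{i<j} ‖v_i − v_j‖²). -/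
lemma key_identity {n d : ℕ} (c : Fin n → ℝ) (v : Fin n → EuclideanSpace ℝ (Fin d))
    (hc : ∑ i, c i = 0) :
    ∑ i, ∑ j ∈ Finset.Ioi i, c i * c j * ‖v i - v j‖ ^ 2
      = -‖∑ i, c i • v i‖ ^ 2 := by
  have h1 : ∀ i : Fin n, ∑ j, c i * c j * ‖v i‖ ^ 2 = 0 := by
    intro i
    have e : ∀ j : Fin n, c i * c j * ‖v i‖ ^ 2 = (c i * ‖v i‖ ^ 2) * c j := fun j => by ring
    rw [Finset.sum_congr rfl fun j _ => e j, ← Finset.mul_sum, hc, mul_zero]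
  have h2 : ∑ i, ∑ j, c i * c j * ‖v j‖ ^ 2 = 0 := by
    rw [Finset.sum_comm]
    refine Finset.sum_eq_zero fun j _ => ?_
    have e : ∀ i : Fin n, c i * c j * ‖v j‖ ^ 2 = (c j * ‖v j‖ ^ 2) * c i := fun i => by ring
    rw [Finset.sum_congr rfl fun i _ => e i, ← Finset.mul_sum, hc, mul_zero]
  have h3 : ∑ i, ∑ j, (inner ℝ (c i • v i) (c j • v j) : ℝ) = ‖∑ i, c i • v i‖ ^ 2 := by
    simp only [← inner_sum, ← sum_inner]
    exact real_inner_self_eq_norm_sq _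
  have hfull : ∑ i, ∑ j, c i * c j * ‖v i - v j‖ ^ 2
      = -2 * ‖∑ i, c i • v i‖ ^ 2 := by
    have expand : ∀ i j : Fin n, c i * c j * ‖v i - v j‖ ^ 2
        = c i * c j * ‖v i‖ ^ 2 + c i * c j * ‖v j‖ ^ 2
          - 2 * (inner ℝ (c i • v i) (c j • v j) : ℝ) := by
      intro i j
      rw [norm_sub_sq_real, real_inner_smul_left, real_inner_smul_right]
      ring
    calc ∑ i, ∑ j, c i * c j * ‖v i - v j‖ ^ 2
        = ∑ i, ((∑ j, c i * c j * ‖v i‖ ^ 2) + (∑ j, c i * c j * ‖v j‖ ^ 2)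
            - 2 * ∑ j, (inner ℝ (c i • v i) (c j • v j) : ℝ)) := by
          refine Finset.sum_congr rfl fun i _ => ?_
          rw [Finset.sum_congr rfl fun j _ => expand i j, Finset.sum_sub_distrib,
            Finset.sum_add_distrib, Finset.mul_sum]
      _ = -2 * ‖∑ i, c i • v i‖ ^ 2 := by
          simp only [Finset.sum_sub_distrib, Finset.sum_add_distrib,
            Finset.sum_congr rfl fun i _ => h1 i, Finset.sum_const, smul_zero, ← Finset.mul_sum]
          rw [h2, h3]
          ring
  have hsymm : ∑ i, ∑ j, c i * c j * ‖v i - v j‖ ^ 2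
      = 2 * ∑ i, ∑ j ∈ Finset.Ioi i, c i * c j * ‖v i - v j‖ ^ 2 := by
    set g : Fin n → Fin n → ℝ := fun i j => c i * c j * ‖v i - v j‖ ^ 2 with hg
    have hsy : ∀ i j, g j i = g i j := fun i j => by
      simp only [hg, norm_sub_rev (v i) (v j)]; ring
    have h := Finset.sum_sum_Ioi_add_eq_sum_sum_off_diag g
    calc ∑ i, ∑ j, g i j
        = ∑ i, ((∑ j ∈ ({i}ᶜ : Finset (Fin n)), g i j) + ∑ j ∈ {i}, g i j) := by
          refine Finset.sum_congr rfl fun i _ => ?_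
          rw [Finset.sum_compl_add_sum]
      _ = ∑ i, ∑ j ∈ ({i}ᶜ : Finset (Fin n)), g j i := by
          refine Finset.sum_congr rfl fun i _ => ?_
          simp only [hg, Finset.sum_singleton, sub_self, norm_zero]
          norm_num
          exact Finset.sum_congr rfl fun j _ => (hsy i j).symm
      _ = ∑ i, ∑ j ∈ Finset.Ioi i, (g j i + g i j) := by
          convert h.symm using 3
      _ = 2 * ∑ i, ∑ j ∈ Finset.Ioi i, g i j := by
          rw [Finset.mul_sum]
          refine Finset.sum_congr rfl fun i _ => ?_
          rw [Finset.mul_sum]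
          exact Finset.sum_congr rfl fun j _ => by rw [hsy]; ring
  linarith [hfull, hsymm]

lemma key_bound {n d : ℕ} (c : Fin n → ℝ) (v : Fin n → EuclideanSpace ℝ (Fin d))
    (hc : ∑ i, c i = 0) (B : ℝ) (hB : 0 ≤ B) (habs : ∀ i, |c i| ≤ B) :
    ‖∑ i, c i • v i‖ ≤ B * Real.sqrt (∑ i, ∑ j ∈ Finset.Ioi i, ‖v i - v j‖ ^ 2) := by
  set T : ℝ := ∑ i, ∑ j ∈ Finset.Ioi i, ‖v i - v j‖ ^ 2 with hT
  have hT0 : 0 ≤ T :=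
    Finset.sum_nonneg fun i _ => Finset.sum_nonneg fun j _ => sq_nonneg _
  have hid := key_identity c v hc
  have hsq : ‖∑ i, c i • v i‖ ^ 2 ≤ B ^ 2 * T := by
    have hterm : ∀ i j : Fin n, -(B ^ 2 * ‖v i - v j‖ ^ 2) ≤ c i * c j * ‖v i - v j‖ ^ 2 := by
      intro i j
      have h1 : |c i * c j| ≤ B ^ 2 := by
        rw [abs_mul]
        calc |c i| * |c j| ≤ B * B :=
              mul_le_mul (habs i) (habs j) (abs_nonneg _) hB
          _ = B ^ 2 := (sq B).symm
      have h2 : -(B ^ 2) ≤ c i * c j := neg_le_of_abs_le h1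
      nlinarith [sq_nonneg ‖v i - v j‖]
    have hlb : -(B ^ 2 * T) ≤ ∑ i, ∑ j ∈ Finset.Ioi i, c i * c j * ‖v i - v j‖ ^ 2 := by
      rw [hT, Finset.mul_sum, ← Finset.sum_neg_distrib]
      refine Finset.sum_le_sum fun i _ => ?_
      rw [Finset.mul_sum, ← Finset.sum_neg_distrib]
      exact Finset.sum_le_sum fun j _ => hterm i j
    linarith
  calc ‖∑ i, c i • v i‖ = Real.sqrt (‖∑ i, c i • v i‖ ^ 2) :=
        (Real.sqrt_sq (norm_nonneg _)).symm
    _ ≤ Real.sqrt (B ^ 2 * T) := Real.sqrt_le_sqrt hsq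
    _ = B * Real.sqrt T := by
        rw [Real.sqrt_mul (sq_nonneg B), Real.sqrt_sq hB]

/-- Every point of the convex hull of a simplex is within distance
`(1/m)·sqrt(∑_{i<j} ‖v_i - v_j‖²)` of the grid of points whose barycentric
coordinates are multiples of `1/m`. -/
theorem grid_covering {d k : ℕ} (m : ℕ) (hm : 1 ≤ m)
    (v : Fin (k + 1) → EuclideanSpace ℝ (Fin d)) :
    ∀ q ∈ convexHull ℝ (Set.range v),
      ∃ lam : Fin (k + 1) → ℝ, (∀ i, 0 ≤ lam i) ∧ (∑ i, lam i = 1) ∧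
        (∀ i, ∃ nI : ℕ, lam i = (nI : ℝ) / m) ∧
        dist q (∑ i, lam i • v i) ≤
          (1 / m) * Real.sqrt (∑ i, ∑ j ∈ Finset.Ioi i, ‖v i - v j‖ ^ 2) := by
  intro q hq
  have hm0 : (0 : ℝ) < m := by exact_mod_cast Nat.lt_of_lt_of_le Nat.zero_lt_one hm
  rw [convexHull_range_eq_exists_affineCombination] at hq
  obtain ⟨s, w, hw0, hw1, hqeq⟩ := hq
  set μ : Fin (k + 1) → ℝ := fun i => if i ∈ s then w i else 0 with hμ
  have hμ0 : ∀ i, 0 ≤ μ i := by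
    intro i; simp only [hμ]; split
    · exact hw0 i ‹_›
    · exact le_refl _
  have hμ1 : ∑ i, μ i = 1 := by
    rw [hμ, Finset.sum_ite_mem, Finset.univ_inter, hw1]
  have hqe : q = ∑ i, μ i • v i := by
    rw [← hqeq, Finset.affineCombination_eq_linear_combination s v w hw1]
    rw [hμ]
    simp only [ite_smul, zero_smul]
    rw [Finset.sum_ite_mem, Finset.univ_inter]
  -- cumulative sums and ceilings
  set w' : ℕ → ℝ := fun nn => if h : nn < k + 1 then μ ⟨nn, h⟩ else 0 with hw'
  set S : ℕ → ℝ := fun nn => ∑ j ∈ Finset.range nn, w' j with hS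
  set F : ℕ → ℕ := fun nn => ⌈(m : ℝ) * S nn⌉₊ with hF
  have hw'0 : ∀ nn, 0 ≤ w' nn := by
    intro nn; rw [hw']; dsimp only; split
    · exact hμ0 _
    · exact le_refl _
  have hS0 : ∀ nn, 0 ≤ S nn := fun nn => Finset.sum_nonneg fun j _ => hw'0 j
  have hSmono : Monotone S := by
    intro a b hab
    exact Finset.sum_le_sum_of_subset_of_nonneg (Finset.range_subset_range.2 hab)
      (fun j _ _ => hw'0 j)
  have hFmono : Monotone F := by
    intro a b hab
    exact Nat.ceil_le_ceil (mul_le_mul_of_nonneg_left (hSmono hab) (le_of_lt hm0))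
  have hF0 : F 0 = 0 := by
    rw [hF]; simp [hS]
  have hSk : S (k + 1) = 1 := by
    rw [hS]
    dsimp only
    rw [← Fin.sum_univ_eq_sum_range w' (k + 1), ← hμ1]
    refine Finset.sum_congr rfl fun i _ => ?_
    rw [hw']
    simp [i.isLt]
  have hFk : F (k + 1) = m := by
    rw [hF]; dsimp only; rw [hSk, mul_one, Nat.ceil_natCast]
  have hwS : ∀ i : Fin (k + 1), μ i = S (i.val + 1) - S i.val := by
    intro i
    rw [hS]; dsimp only
    rw [Finset.sum_range_succ]
    have : w' i.val = μ i := by rw [hw']; simp [i.isLt]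
    rw [this]; ring
  -- the grid point coefficients
  set lam : Fin (k + 1) → ℝ := fun i => ((F (i.val + 1) : ℝ) - F i.val) / m with hlam
  have hlamnn : ∀ i, 0 ≤ lam i := by
    intro i
    apply div_nonneg _ (le_of_lt hm0)
    rw [sub_nonneg]
    exact_mod_cast hFmono (Nat.le_succ _)
  have hlamsum : ∑ i, lam i = 1 := by
    rw [hlam]
    rw [Fin.sum_univ_eq_sum_range (fun nn => ((F (nn + 1) : ℝ) - F nn) / m) (k + 1)]
    rw [← Finset.sum_div, Finset.sum_range_sub (fun nn => (F nn : ℝ)), hF0, hFk]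
    simp [ne_of_gt hm0]
  refine ⟨lam, hlamnn, hlamsum, ?_, ?_⟩
  · intro i
    refine ⟨F (i.val + 1) - F i.val, ?_⟩
    rw [hlam]
    rw [Nat.cast_sub (hFmono (Nat.le_succ _))]
  · -- the distance bound
    set c : Fin (k + 1) → ℝ := fun i => μ i - lam i with hc
    have hcsum : ∑ i, c i = 0 := by
      rw [hc, Finset.sum_sub_distrib, hμ1, hlamsum, sub_self]
    have he0 : ∀ nn, 0 ≤ (F nn : ℝ) - m * S nn := by
      intro nn; rw [sub_nonneg, hF]; exact Nat.le_ceil _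
    have he1 : ∀ nn, (F nn : ℝ) - m * S nn < 1 := by
      intro nn
      rw [sub_lt_iff_lt_add', hF]
      exact Nat.ceil_lt_add_one (mul_nonneg (le_of_lt hm0) (hS0 nn))
    have habs : ∀ i, |c i| ≤ 1 / m := by
      intro i
      have hci : c i = (((F i.val : ℝ) - m * S i.val) - ((F (i.val + 1) : ℝ) - m * S (i.val + 1))) / m := by
        rw [hc]; dsimp only
        rw [hwS i, hlam]
        field_simp
        ring
      rw [hci, abs_div, abs_of_pos hm0]
      refine div_le_div_of_nonneg_right ?_ (le_of_lt hm0)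
      exact abs_le.mpr ⟨by linarith [he0 i.val, he1 (i.val + 1)],
        by linarith [he0 (i.val + 1), he1 i.val]⟩
    have hdist : q - ∑ i, lam i • v i = ∑ i, c i • v i := by
      rw [hqe, hc, ← Finset.sum_sub_distrib]
      simp [sub_smul]
    rw [dist_eq_norm, hdist]
    exact key_bound c v hcsum (1 / m) (by positivity) habs
end

section
/- Let σ = {v_0, …, v_k} ⊂ R^d, and suppose the closed ball B_r(c) of radius r centered at c contains σ. Then every point p ∈ conv(σ) satisfies ‖p − c‖² ≤ r² − min_{0≤i≤k} ‖v_i − p‖². -/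
/-- If the simplex `σ = {v_0, …, v_k}` is contained in the closed ball `B_r(c)`,
then every `p ∈ conv(σ)` satisfies `‖p - c‖² ≤ r² - min_i ‖v_i - p‖²`. -/
theorem enclosing_ball_bound {d k : ℕ} (v : Fin (k + 1) → EuclideanSpace ℝ (Fin d))
    (c : EuclideanSpace ℝ (Fin d)) (r : ℝ)
    (hball : ∀ i, ‖v i - c‖ ≤ r) :
    ∀ p ∈ convexHull ℝ (Set.range v),
      ‖p - c‖ ^ 2 ≤ r ^ 2 - ⨅ i, ‖v i - p‖ ^ 2 := by
  intro p hp
  rw [convexHull_range_eq_exists_affineCombination] at hp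
  obtain ⟨s, w, hw₀, hw₁, hpc⟩ := hp
  -- extend weights to all of Fin (k+1)
  set W : Fin (k + 1) → ℝ := fun i => if i ∈ s then w i else 0 with hW
  have hW₀ : ∀ i, 0 ≤ W i := by
    intro i
    by_cases h : i ∈ s <;> simp [hW, h, hw₀ i]
  have hW₁ : ∑ i, W i = 1 := by
    rw [← hw₁, Finset.sum_ite_mem, Finset.univ_inter]
  have hWp : ∑ i, W i • v i = p := by
    rw [← hpc, Finset.affineCombination_eq_linear_combination s v w hw₁]
    simp only [hW, ite_smul, zero_smul, Finset.sum_ite_mem, Finset.univ_inter]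
  -- variance identity
  have hr : 0 ≤ r := le_trans (norm_nonneg _) (hball 0)
  have key : ∑ i, W i * ‖v i - c‖ ^ 2
      = ‖p - c‖ ^ 2 + ∑ i, W i * ‖v i - p‖ ^ 2 := by
    have expand : ∀ i, ‖v i - c‖ ^ 2
        = ‖v i - p‖ ^ 2 + 2 * inner ℝ (v i - p) (p - c) + ‖p - c‖ ^ 2 := by
      intro i
      have : v i - c = (v i - p) + (p - c) := by abel
      rw [this, norm_add_sq_real]
    simp only [expand, mul_add, Finset.sum_add_distrib]
    have h1 : ∑ i, W i • (v i - p) = 0 := by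
      have h2 : ∑ i, W i • (v i - p) = (∑ i, W i • v i) - (∑ i, W i) • p := by
        simp [smul_sub, Finset.sum_sub_distrib, Finset.sum_smul]
      rw [h2, hWp, hW₁, one_smul, sub_self]
    have hcross : ∑ i, W i * (2 * inner ℝ (v i - p) (p - c)) = 0 := by
      have h3 : ∑ i, W i * (2 * (inner ℝ (v i - p) (p - c) : ℝ))
          = 2 * inner ℝ (∑ i, W i • (v i - p)) (p - c) := by
        rw [sum_inner, Finset.mul_sum]
        refine Finset.sum_congr rfl fun i _ => ?_
        rw [real_inner_smul_left]; ring
      rw [h3, h1, inner_zero_left, mul_zero]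
    rw [hcross, ← Finset.sum_mul, hW₁]
    ring
  have hsum_le : ∑ i, W i * ‖v i - c‖ ^ 2 ≤ r ^ 2 := by
    calc ∑ i, W i * ‖v i - c‖ ^ 2 ≤ ∑ i, W i * r ^ 2 := by
          apply Finset.sum_le_sum
          intro i _
          exact mul_le_mul_of_nonneg_left
            (pow_le_pow_left₀ (norm_nonneg _) (hball i) 2) (hW₀ i)
      _ = r ^ 2 := by rw [← Finset.sum_mul, hW₁, one_mul]
  have hinf_le : (⨅ i, ‖v i - p‖ ^ 2) ≤ ∑ i, W i * ‖v i - p‖ ^ 2 := by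
    calc (⨅ i, ‖v i - p‖ ^ 2) = ∑ i, W i * (⨅ j, ‖v j - p‖ ^ 2) := by
          rw [← Finset.sum_mul, hW₁, one_mul]
      _ ≤ ∑ i, W i * ‖v i - p‖ ^ 2 := by
          apply Finset.sum_le_sum
          intro i _
          apply mul_le_mul_of_nonneg_left _ (hW₀ i)
          exact ciInf_le (Set.Finite.bddBelow (Set.finite_range _)) i
  linarith [key ▸ hsum_le]
end

section
/- Let σ = {v_0, …, v_k} ⊂ R^d with σ contained in the closed ball B_r(c). If p ∈ conv(σ) and z ∈ R^d satisfies ‖z − p‖ ≤ min_{0≤i≤k} ‖p − v_i‖, then ‖z − c‖ ≤ √2 · r. Consequently, for any finite X ⊆ R^d containing σ, max_{p∈conv(σ)} min_{x∈X} d(p,x) = max_{p∈conv(σ)} min{ d(p,x) : x ∈ X ∩ B_{√2 r}(c) }. -/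
open scoped RealInnerProductSpace


/-- Masking lemma: if `σ ⊂ B_r(c)`, any point `z` within `min_i d(p, v_i)` of a point
`p ∈ conv(σ)` lies in `B_{√2 r}(c)`; consequently, for any finite `X ⊇ σ`, the directed
Hausdorff distance from `conv(σ)` to `X` equals that to `X ∩ B_{√2 r}(c)`. -/
theorem masking_lemma {d k : ℕ} (v : Fin (k + 1) → EuclideanSpace ℝ (Fin d))
    (c : EuclideanSpace ℝ (Fin d)) (r : ℝ) (hr : 0 ≤ r)
    (hball : ∀ i, dist (v i) c ≤ r) :
    (∀ p ∈ convexHull ℝ (Set.range v), ∀ z : EuclideanSpace ℝ (Fin d),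
        dist z p ≤ (⨅ i, dist p (v i)) → dist z c ≤ Real.sqrt 2 * r) ∧
    ∀ X : Finset (EuclideanSpace ℝ (Fin d)),
      Set.range v ⊆ (X : Set (EuclideanSpace ℝ (Fin d))) →
      (⨆ p : convexHull ℝ (Set.range v),
          Metric.infDist (p : EuclideanSpace ℝ (Fin d))
            (X : Set (EuclideanSpace ℝ (Fin d)))) =
        ⨆ p : convexHull ℝ (Set.range v),
          Metric.infDist (p : EuclideanSpace ℝ (Fin d))
            ((X : Set (EuclideanSpace ℝ (Fin d))) ∩
              Metric.closedBall c (Real.sqrt 2 * r)) := by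
  have key : ∀ p ∈ convexHull ℝ (Set.range v), ∀ z : EuclideanSpace ℝ (Fin d),
      dist z p ≤ (⨅ i, dist p (v i)) → dist z c ≤ Real.sqrt 2 * r := by
    intro p hp z hz
    -- find i maximizing ⟪p - c, v i⟫
    obtain ⟨i, hi⟩ := Finite.exists_max (fun i => ⟪p - c, v i⟫)
    have hconv : ⟪p - c, p⟫ ≤ ⟪p - c, v i⟫ := by
      have hcvx : Convex ℝ {w : EuclideanSpace ℝ (Fin d) | ⟪p - c, w⟫ ≤ ⟪p - c, v i⟫} :=
        convex_halfSpace_le ((innerₗ _ (p - c)).isLinear) _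
      have hsub : Set.range v ⊆ {w : EuclideanSpace ℝ (Fin d) | ⟪p - c, w⟫ ≤ ⟪p - c, v i⟫} := by
        rintro _ ⟨j, rfl⟩; exact hi j
      exact convexHull_min hsub hcvx hp
    have hproj : (0:ℝ) ≤ ⟪v i - p, p - c⟫ := by
      have := hconv
      rw [real_inner_comm]
      rw [show v i - p = (v i) - p from rfl]
      have : ⟪p - c, v i - p⟫ = ⟪p - c, v i⟫ - ⟪p - c, p⟫ := by
        rw [inner_sub_right]
      rw [this]; linarith
    -- Pythagorean-type bound
    have hpyth : dist p (v i) ^ 2 + dist p c ^ 2 ≤ r ^ 2 := by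
      have hexp : ‖(v i - p) + (p - c)‖ ^ 2
          = ‖v i - p‖ ^ 2 + 2 * ⟪v i - p, p - c⟫ + ‖p - c‖ ^ 2 := by
        rw [← real_inner_self_eq_norm_sq, ← real_inner_self_eq_norm_sq,
          ← real_inner_self_eq_norm_sq]
        simp only [inner_add_add_self]
        rw [real_inner_comm (p - c) (v i - p)]
        ring
      have h1 : (v i - p) + (p - c) = v i - c := by abel
      have h2 : ‖v i - c‖ ≤ r := by
        have := hball i; rwa [dist_eq_norm] at this
      have h3 : ‖v i - c‖ ^ 2 ≤ r ^ 2 := by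
        have := norm_nonneg (v i - c); nlinarith
      rw [h1] at hexp
      have h4 : dist p (v i) = ‖v i - p‖ := by rw [dist_eq_norm, norm_sub_rev]
      have h5 : dist p c = ‖p - c‖ := dist_eq_norm _ _
      rw [h4, h5]
      nlinarith
    have ha : dist z p ≤ dist p (v i) :=
      le_trans hz (ciInf_le (Finite.bddBelow_range _) i)
    have hb : dist z c ≤ dist z p + dist p c := dist_triangle z p c
    have hsq : dist z c ^ 2 ≤ 2 * r ^ 2 := by
      have h0 := dist_nonneg (x := z) (y := p)
      have h1 := dist_nonneg (x := p) (y := c)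
      have h2 := dist_nonneg (x := z) (y := c)
      nlinarith [sq_nonneg (dist p (v i) - dist p c), dist_nonneg (x := p) (y := v i)]
    have : dist z c ≤ Real.sqrt (2 * r ^ 2) := by
      rw [← Real.sqrt_sq dist_nonneg]
      exact Real.sqrt_le_sqrt hsq
    calc dist z c ≤ Real.sqrt (2 * r ^ 2) := this
      _ = Real.sqrt 2 * r := by
          rw [Real.sqrt_mul (by norm_num), Real.sqrt_sq hr]
  refine ⟨key, ?_⟩
  intro X hX
  have heq : ∀ p ∈ convexHull ℝ (Set.range v),
      Metric.infDist p (X : Set (EuclideanSpace ℝ (Fin d)))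
        = Metric.infDist p ((X : Set (EuclideanSpace ℝ (Fin d))) ∩
            Metric.closedBall c (Real.sqrt 2 * r)) := by
    intro p hp
    have hXne : (X : Set (EuclideanSpace ℝ (Fin d))).Nonempty :=
      ⟨v 0, hX ⟨0, rfl⟩⟩
    obtain ⟨x, hxX, hxd⟩ := (X.finite_toSet.isCompact).exists_infDist_eq_dist hXne p
    have hxmin : dist p x ≤ ⨅ i, dist p (v i) := by
      apply le_ciInf
      intro i
      rw [← hxd]
      exact Metric.infDist_le_dist_of_mem (hX ⟨i, rfl⟩)
    have hxball : x ∈ Metric.closedBall c (Real.sqrt 2 * r) := by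
      rw [Metric.mem_closedBall]
      exact key p hp x (by rwa [dist_comm])
    refine le_antisymm
      (Metric.infDist_le_infDist_of_subset Set.inter_subset_left ⟨x, Set.mem_inter hxX hxball⟩) ?_
    rw [hxd]
    exact Metric.infDist_le_dist_of_mem (Set.mem_inter hxX hxball)
  exact iSup_congr fun p => heq p p.2
end

section
/- Let X ⊆ R^d be finite, L ⊆ R^d finite, and for each simplex σ ⊆ L let P_σ ⊆ conv(σ) be a finite subset with directed Hausdorff distance from conv(σ) to P_σ at most ε. Define filtration functions f(σ) = max_{p∈conv(σ)} d(p,X) and g(σ) = max_{τ⊆σ} max_{p∈P_τ} d(p,X), where d(p,X) = min_{x∈X} ‖p−x‖. Then for all simplices σ: g(σ) ≤ f(σ) ≤ g(σ) + ε. -/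
/-- The discretized Flood filtration value `g` sandwiches the exact one `f`:
`g(σ) ≤ f(σ) ≤ g(σ) + ε` when each `P_τ ⊆ conv(τ)` is an `ε`-cover of `conv(τ)`. -/
theorem approx_filtration_sandwich {d : ℕ}
    (X L : Finset (EuclideanSpace ℝ (Fin d))) (hX : X.Nonempty)
    (P : Finset (EuclideanSpace ℝ (Fin d)) → Finset (EuclideanSpace ℝ (Fin d)))
    (ε : ℝ) (hε : 0 ≤ ε)
    (hPsub : ∀ τ : Finset (EuclideanSpace ℝ (Fin d)),
      (P τ : Set (EuclideanSpace ℝ (Fin d))) ⊆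
        convexHull ℝ (τ : Set (EuclideanSpace ℝ (Fin d))))
    (σ : Finset (EuclideanSpace ℝ (Fin d))) (hσ : σ.Nonempty) (hσL : σ ⊆ L)
    (hHaus : ∀ τ : Finset (EuclideanSpace ℝ (Fin d)), τ ⊆ σ → τ.Nonempty →
      ∀ q ∈ convexHull ℝ (τ : Set (EuclideanSpace ℝ (Fin d))),
        ∃ p ∈ P τ, dist q p ≤ ε) :
    (⨆ τ ∈ {τ : Finset (EuclideanSpace ℝ (Fin d)) | τ ⊆ σ ∧ τ.Nonempty},
        ⨆ p ∈ (P τ : Set (EuclideanSpace ℝ (Fin d))),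
          Metric.infDist p (X : Set (EuclideanSpace ℝ (Fin d)))) ≤
      (⨆ p ∈ convexHull ℝ (σ : Set (EuclideanSpace ℝ (Fin d))),
        Metric.infDist p (X : Set (EuclideanSpace ℝ (Fin d)))) ∧
    (⨆ p ∈ convexHull ℝ (σ : Set (EuclideanSpace ℝ (Fin d))),
        Metric.infDist p (X : Set (EuclideanSpace ℝ (Fin d)))) ≤
      (⨆ τ ∈ {τ : Finset (EuclideanSpace ℝ (Fin d)) | τ ⊆ σ ∧ τ.Nonempty},
        ⨆ p ∈ (P τ : Set (EuclideanSpace ℝ (Fin d))),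
          Metric.infDist p (X : Set (EuclideanSpace ℝ (Fin d)))) + ε := by

  classical
  set h : EuclideanSpace ℝ (Fin d) → ℝ :=
    fun p => Metric.infDist p (X : Set (EuclideanSpace ℝ (Fin d))) with hh
  have hh0 : ∀ p, 0 ≤ h p := fun p => Metric.infDist_nonneg
  set S : Set (EuclideanSpace ℝ (Fin d)) :=
    convexHull ℝ (σ : Set (EuclideanSpace ℝ (Fin d))) with hS
  have hScompact : IsCompact S := σ.finite_toSet.isCompact_convexHull (𝕜 := ℝ)
  have hSne : S.Nonempty := by
    rw [hS, convexHull_nonempty_iff]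
    exact hσ.to_set.mono (by rfl)
  obtain ⟨pm, hpmS, hpm'⟩ := hScompact.exists_isMaxOn hSne
    (Metric.continuous_infDist_pt (X : Set (EuclideanSpace ℝ (Fin d)))).continuousOn
  have hpm : ∀ p ∈ S, h p ≤ h pm := fun p hp => hpm' hp
  set M : ℝ := h pm with hM
  have hM0 : 0 ≤ M := hh0 pm
  -- membership helper : p ∈ P τ, τ ⊆ σ → p ∈ S
  have hmem : ∀ τ : Finset (EuclideanSpace ℝ (Fin d)), τ ⊆ σ → ∀ p ∈ P τ, p ∈ S := by
    intro τ hτ p hp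
    exact convexHull_mono (by exact_mod_cast hτ) (hPsub τ hp)
  -- f bounded above pointwise, and bdd range
  have hfbdd : BddAbove (Set.range fun p => ⨆ (_ : p ∈ S), h p) := by
    refine ⟨M, ?_⟩
    rintro _ ⟨p, rfl⟩
    dsimp only
    by_cases hp : p ∈ S
    · rw [ciSup_pos hp]; exact hpm p hp
    · haveI : IsEmpty (p ∈ S) := ⟨hp⟩
      rw [Real.iSup_of_isEmpty]
      exact hM0
  have hf_ge : ∀ q ∈ S, h q ≤ ⨆ p ∈ S, h p := by
    intro q hq
    exact le_ciSup_of_le hfbdd q (by rw [ciSup_pos hq])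
  have hf0 : 0 ≤ ⨆ p ∈ S, h p := le_trans (hh0 pm) (hf_ge pm hpmS)
  -- inner sup for g bounded
  have hinner_le : ∀ τ : Finset (EuclideanSpace ℝ (Fin d)), τ ⊆ σ →
      (⨆ p ∈ (P τ : Set (EuclideanSpace ℝ (Fin d))), h p) ≤ M := by
    intro τ hτ
    refine Real.iSup_le (fun p => Real.iSup_le (fun hp => ?_) hM0) hM0
    exact hpm p (hmem τ hτ p hp)
  have hinnerbdd : ∀ τ : Finset (EuclideanSpace ℝ (Fin d)),
      BddAbove (Set.range fun p => ⨆ (_ : p ∈ (P τ : Set (EuclideanSpace ℝ (Fin d)))), h p) := by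
    intro τ
    refine ⟨(insert (0:ℝ) ((P τ).image h)).max' ⟨0, Finset.mem_insert_self _ _⟩, ?_⟩
    rintro _ ⟨p, rfl⟩
    dsimp only
    by_cases hp : p ∈ (P τ : Set (EuclideanSpace ℝ (Fin d)))
    · rw [ciSup_pos hp]
      exact Finset.le_max' _ _ (Finset.mem_insert_of_mem (Finset.mem_image_of_mem h hp))
    · haveI : IsEmpty (p ∈ (P τ : Set (EuclideanSpace ℝ (Fin d)))) := ⟨hp⟩
      rw [Real.iSup_of_isEmpty]
      exact Finset.le_max' _ _ (Finset.mem_insert_self _ _)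
  have houterbdd : BddAbove (Set.range fun τ : Finset (EuclideanSpace ℝ (Fin d)) =>
      ⨆ (_ : τ ∈ {τ : Finset (EuclideanSpace ℝ (Fin d)) | τ ⊆ σ ∧ τ.Nonempty}),
        ⨆ p ∈ (P τ : Set (EuclideanSpace ℝ (Fin d))), h p) := by
    refine ⟨M, ?_⟩
    rintro _ ⟨τ, rfl⟩
    dsimp only
    by_cases hτ : τ ∈ {τ : Finset (EuclideanSpace ℝ (Fin d)) | τ ⊆ σ ∧ τ.Nonempty}
    · rw [ciSup_pos hτ]; exact hinner_le τ hτ.1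
    · haveI : IsEmpty (τ ∈ {τ : Finset (EuclideanSpace ℝ (Fin d)) | τ ⊆ σ ∧ τ.Nonempty}) := ⟨hτ⟩
      rw [Real.iSup_of_isEmpty]
      exact hM0
  set g : ℝ := ⨆ τ ∈ {τ : Finset (EuclideanSpace ℝ (Fin d)) | τ ⊆ σ ∧ τ.Nonempty},
      ⨆ p ∈ (P τ : Set (EuclideanSpace ℝ (Fin d))), h p with hg
  have hg_ge : ∀ τ : Finset (EuclideanSpace ℝ (Fin d)), τ ⊆ σ → τ.Nonempty →
      ∀ p ∈ P τ, h p ≤ g := by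
    intro τ hτσ hτne p hp
    have hτ : τ ∈ {τ : Finset (EuclideanSpace ℝ (Fin d)) | τ ⊆ σ ∧ τ.Nonempty} := ⟨hτσ, hτne⟩
    refine le_trans ?_ (le_ciSup_of_le houterbdd τ (by rw [ciSup_pos hτ]))
    refine le_ciSup_of_le (hinnerbdd τ) p ?_
    rw [ciSup_pos (show p ∈ (P τ : Set (EuclideanSpace ℝ (Fin d))) from hp)]
  -- g ≥ 0
  obtain ⟨x0, hx0σ⟩ := id hσ
  have hx0conv : (x0 : EuclideanSpace ℝ (Fin d)) ∈
      convexHull ℝ (σ : Set (EuclideanSpace ℝ (Fin d))) :=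
    subset_convexHull ℝ _ (by exact_mod_cast hx0σ)
  obtain ⟨p0, hp0, _⟩ := hHaus σ (le_refl σ) hσ x0 hx0conv
  have hg0 : 0 ≤ g := le_trans (hh0 p0) (hg_ge σ (le_refl σ) hσ p0 hp0)
  constructor
  · -- g ≤ f
    refine Real.iSup_le (fun τ => Real.iSup_le (fun hτ => Real.iSup_le (fun p =>
      Real.iSup_le (fun hp => ?_) hf0) hf0) hf0) hf0
    exact hf_ge p (hmem τ hτ.1 p hp)
  · -- f ≤ g + ε
    refine Real.iSup_le (fun p => Real.iSup_le (fun hp => ?_) (add_nonneg hg0 hε))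
      (add_nonneg hg0 hε)
    obtain ⟨q, hq, hqd⟩ := hHaus σ (le_refl σ) hσ p hp
    calc h p ≤ h q + dist p q := Metric.infDist_le_infDist_add_dist
      _ ≤ g + ε := add_le_add (hg_ge σ (le_refl σ) hσ q hq) hqd
end

section
/- Let X ⊆ R^d be finite and let σ be a finite subset of X. Let c be the center of the minimal enclosing ball of σ, with radius ρ = max_{x∈σ} ‖c − x‖. If r ≥ 0 is such that the intersection ⋂_{x∈σ} B_r(x) is nonempty, then ρ ≤ r; moreover c ∈ conv(σ) and max_{p∈conv(σ)} min_{x∈σ} d(p,x) ≤ ρ. -/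
open Finset Metric InnerProductSpace


/-- Properties of the minimal enclosing ball of `σ ⊆ X`: if all balls `B_r(x)`,
`x ∈ σ`, have a common point, then the minimal enclosing radius `ρ` satisfies
`ρ ≤ r`; moreover the center `c` lies in `conv(σ)` and every point of `conv(σ)` is
within distance `ρ` of `σ`. -/
theorem meb_properties {d : ℕ} (X σ : Finset (EuclideanSpace ℝ (Fin d)))
    (hσX : σ ⊆ X) (hσ : σ.Nonempty)
    (c : EuclideanSpace ℝ (Fin d)) (ρ : ℝ)
    (hρ : ρ = σ.sup' hσ (fun x => dist c x))
    (hmin : ∀ c' : EuclideanSpace ℝ (Fin d), ρ ≤ σ.sup' hσ (fun x => dist c' x)) :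
    (∀ r : ℝ, (⋂ x ∈ σ, Metric.closedBall x r).Nonempty → ρ ≤ r) ∧
    c ∈ convexHull ℝ (σ : Set (EuclideanSpace ℝ (Fin d))) ∧
    ∀ p ∈ convexHull ℝ (σ : Set (EuclideanSpace ℝ (Fin d))),
      Metric.infDist p (σ : Set (EuclideanSpace ℝ (Fin d))) ≤ ρ := by
  have hdist : ∀ x ∈ σ, dist c x ≤ ρ := fun x hx => hρ ▸ Finset.le_sup' _ hx
  have hρ0 : 0 ≤ ρ := by
    obtain ⟨x, hx⟩ := hσ
    exact le_trans dist_nonneg (hdist x hx)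
  refine ⟨?_, ?_, ?_⟩
  · rintro r ⟨c', hc'⟩
    simp only [Set.mem_iInter, Metric.mem_closedBall] at hc'
    refine (hmin c').trans (Finset.sup'_le _ _ fun x hx => ?_)
    exact hc' x hx
  · -- c ∈ convexHull
    set K : Set (EuclideanSpace ℝ (Fin d)) := convexHull ℝ (σ : Set _) with hK
    have hKne : K.Nonempty := hσ.to_set.convexHull
    have hKconv : Convex ℝ K := convex_convexHull _ _
    have hKcompact : IsCompact K := (σ.finite_toSet).isCompact_convexHull ℝ
    obtain ⟨v, hvK, hv⟩ := exists_norm_eq_iInf_of_complete_convex hKne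
      (hKcompact.isComplete) hKconv c
    rw [norm_eq_iInf_iff_real_inner_le_zero hKconv hvK] at hv
    by_contra hc
    have hδ : 0 < ‖c - v‖ := by
      rw [norm_pos_iff, sub_ne_zero]
      rintro rfl; exact hc hvK
    -- For each x ∈ σ, dist v x ^ 2 ≤ ρ^2 - ‖c - v‖^2
    have key : ∀ x ∈ σ, dist v x ^ 2 + ‖c - v‖ ^ 2 ≤ ρ ^ 2 := by
      intro x hx
      have hxK : x ∈ K := subset_convexHull ℝ _ hx
      have h1 : ⟪c - v, x - v⟫_ℝ ≤ 0 := hv x hxK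
      have h2 : dist c x ^ 2 = ‖c - v‖ ^ 2 + 2 * ⟪c - v, v - x⟫_ℝ + ‖v - x‖ ^ 2 := by
        rw [dist_eq_norm, show c - x = (c - v) + (v - x) by abel,
          norm_add_sq_real]
      have h3 : 0 ≤ ⟪c - v, v - x⟫_ℝ := by
        rw [show v - x = -(x - v) by abel, inner_neg_right]; linarith
      have h4 : dist c x ^ 2 ≤ ρ ^ 2 := by
        have := hdist x hx
        nlinarith [dist_nonneg (x := c) (y := x)]
      rw [dist_eq_norm]
      nlinarith
    have : σ.sup' hσ (fun x => dist v x) < ρ := by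
      have hρpos : 0 < ρ := by
        obtain ⟨x, hx⟩ := hσ
        nlinarith [key x hx, dist_nonneg (x := v) (y := x)]
      refine (Finset.sup'_lt_iff hσ).mpr fun x hx => ?_
      nlinarith [key x hx, dist_nonneg (x := v) (y := x)]
    exact absurd (hmin v) (not_le.mpr this)
  · -- third part
    intro p hp
    rw [Finset.convexHull_eq, Set.mem_setOf_eq] at hp
    obtain ⟨w, hw0, hw1, hwp⟩ := hp
    rw [Finset.centerMass_eq_of_sum_1 _ _ hw1] at hwp
    simp only [id] at hwp
    by_contra hlt
    push_neg at hlt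
    have hfar : ∀ x ∈ σ, ρ < dist p x := fun x hx =>
      lt_of_lt_of_le hlt (Metric.infDist_le_dist_of_mem (by exact_mod_cast hx))
    have hzero : ∑ y ∈ σ, w y • (y - p) = 0 := by
      simp only [smul_sub, Finset.sum_sub_distrib, ← Finset.sum_smul, hw1, one_smul, hwp,
        sub_self]
    have hinner : ∑ y ∈ σ, w y * ⟪y - p, p - c⟫_ℝ = 0 := by
      calc ∑ y ∈ σ, w y * ⟪y - p, p - c⟫_ℝ
          = ∑ y ∈ σ, ⟪w y • (y - p), p - c⟫_ℝ :=
            Finset.sum_congr rfl fun y _ => (real_inner_smul_left _ _ _).symm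
        _ = ⟪∑ y ∈ σ, w y • (y - p), p - c⟫_ℝ := (sum_inner _ _ _).symm
        _ = 0 := by rw [hzero, inner_zero_left]
    have hident : ∑ y ∈ σ, w y * ‖y - c‖ ^ 2
        = (∑ y ∈ σ, w y * ‖y - p‖ ^ 2) + ‖p - c‖ ^ 2 := by
      have : ∀ y ∈ σ, w y * ‖y - c‖ ^ 2
          = w y * ‖y - p‖ ^ 2 + 2 * (w y * ⟪y - p, p - c⟫_ℝ) + w y * ‖p - c‖ ^ 2 := by
        intro y hy
        have : ‖y - c‖ ^ 2 = ‖y - p‖ ^ 2 + 2 * ⟪y - p, p - c⟫_ℝ + ‖p - c‖ ^ 2 := by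
          rw [show y - c = (y - p) + (p - c) by abel, norm_add_sq_real]
        rw [this]; ring
      rw [Finset.sum_congr rfl this, Finset.sum_add_distrib, Finset.sum_add_distrib,
        ← Finset.mul_sum, hinner, ← Finset.sum_mul, hw1]
      ring
    have hle : ∑ y ∈ σ, w y * ‖y - c‖ ^ 2 ≤ ρ ^ 2 := by
      calc ∑ y ∈ σ, w y * ‖y - c‖ ^ 2 ≤ ∑ y ∈ σ, w y * ρ ^ 2 := by
            refine Finset.sum_le_sum fun y hy => ?_
            have h1 := hdist y hy
            rw [dist_eq_norm, norm_sub_rev] at h1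
            have h2 : ‖y - c‖ ^ 2 ≤ ρ ^ 2 := by nlinarith [norm_nonneg (y - c)]
            exact mul_le_mul_of_nonneg_left h2 (hw0 y hy)
        _ = ρ ^ 2 := by rw [← Finset.sum_mul, hw1, one_mul]
    obtain ⟨y₀, hy₀, hwy₀⟩ : ∃ y ∈ σ, 0 < w y := by
      by_contra h
      push_neg at h
      have : ∑ y ∈ σ, w y = 0 :=
        Finset.sum_eq_zero fun y hy => le_antisymm (h y hy) (hw0 y hy)
      rw [hw1] at this; norm_num at this
    have hgt : ρ ^ 2 < ∑ y ∈ σ, w y * ‖y - p‖ ^ 2 := by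
      have : ∑ y ∈ σ, w y * ρ ^ 2 < ∑ y ∈ σ, w y * ‖y - p‖ ^ 2 := by
        refine Finset.sum_lt_sum (fun y hy => ?_) ⟨y₀, hy₀, ?_⟩
        · have h1 := hfar y hy
          rw [dist_eq_norm, show p - y = -(y - p) by abel, norm_neg] at h1
          have h2 : ρ ^ 2 ≤ ‖y - p‖ ^ 2 := by nlinarith
          exact mul_le_mul_of_nonneg_left h2 (hw0 y hy)
        · have h1 := hfar y₀ hy₀
          rw [dist_eq_norm, show p - y₀ = -(y₀ - p) by abel, norm_neg] at h1
          have h2 : ρ ^ 2 < ‖y₀ - p‖ ^ 2 := by nlinarith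
          exact (mul_lt_mul_iff_right₀ hwy₀).mpr h2
      rwa [← Finset.sum_mul, hw1, one_mul] at this
    nlinarith [sq_nonneg ‖p - c‖]
end
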